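/- Let A, B ∈ GL(d, ℝ) be expansive matrices. Then A and B are equivalent (their step homogeneous quasi-norms are equivalent) if and only if the transposes A* and B* are equivalent. -/

import Mathlib

/-! Write an expansive ellipsoid as `{x | ‖P x‖ < 1}`; expansivity becomes `‖P A⁻¹ P⁻¹‖ < 1`.
A step quasi-norm is constant on the shells `Aⁱ⁺¹Ω \ AⁱΩ`, so `ρ_A ≤ C ρ_B` amounts to the
inclusions `Bʲ⁺¹Ω_B ⊆ AⁱΩ_A` wherever `C |det B|ʲ < |det A|ⁱ`, i.e. to `‖P A⁻ⁱ Bʲ⁺¹ Q⁻¹‖ ≤ 1`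
there. Since `P A⁻¹ P⁻¹` is a strict contraction, shifting `i` shows that this is equivalent
to the boundedness of `‖A⁻ⁱ Bʲ‖` on such a region, a condition that no longer mentions the
ellipsoids. The operator norm is invariant under transposition, and `(i, j) ↦ (-j, -i)` maps the
region for `(B, A)` onto the one for `(Aᵀ, Bᵀ)`, so `ρ_B ≲ ρ_A` gives `ρ_{Aᵀ} ≲ ρ_{Bᵀ}`.
It remains to note that `Aᵀ` expands the dual ellipsoid `{x | ‖P⁻ᵀ x‖ < 1}`. -/

open MeasureTheory
open scoped Pointwise

/-- A real matrix is expansive if it is invertible and all its complex eigenvalues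
have absolute value strictly greater than `1`. -/
def Expansive {d : ℕ} (A : Matrix (Fin d) (Fin d) ℝ) : Prop :=
  IsUnit A ∧ ∀ μ ∈ spectrum ℂ (A.map (algebraMap ℝ ℂ)), 1 < ‖μ‖

/-- The action of a matrix on Euclidean space. -/
def ms {d : ℕ} (A : Matrix (Fin d) (Fin d) ℝ) (x : EuclideanSpace ℝ (Fin d)) :
    EuclideanSpace ℝ (Fin d) := WithLp.toLp 2 (A.mulVec x)

/-- An ellipsoid of volume one satisfying `Ω ⊆ rΩ ⊆ AΩ` for some `r > 1`. -/
def IsExpansiveEllipsoid {d : ℕ} (A : Matrix (Fin d) (Fin d) ℝ)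
    (Ω : Set (EuclideanSpace ℝ (Fin d))) : Prop :=
  (∃ P : Matrix (Fin d) (Fin d) ℝ, IsUnit P ∧ Ω = {x | ‖ms P x‖ < 1}) ∧
    volume Ω = 1 ∧ ∃ r : ℝ, 1 < r ∧ Ω ⊆ r • Ω ∧ r • Ω ⊆ ms A '' Ω

/-- The step homogeneous quasi-norm of `A` associated to the ellipsoid `Ω`:
`ρ x = |det A| ^ i` for `x ∈ A^{i+1} Ω \ A^i Ω`, and `ρ 0 = 0`. -/
def IsStepQuasiNorm {d : ℕ} (A : Matrix (Fin d) (Fin d) ℝ)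
    (Ω : Set (EuclideanSpace ℝ (Fin d))) (ρ : EuclideanSpace ℝ (Fin d) → ℝ) : Prop :=
  ρ 0 = 0 ∧ ∀ i : ℤ, ∀ x ∈ ms (A ^ (i + 1)) '' Ω \ ms (A ^ i) '' Ω, ρ x = |A.det| ^ i

/-- Two expansive matrices are equivalent if their step homogeneous quasi-norms
(associated to expansive ellipsoids) are equivalent. -/
def StepEquivalent {d : ℕ} (A B : Matrix (Fin d) (Fin d) ℝ) : Prop :=
  ∃ (ΩA ΩB : Set (EuclideanSpace ℝ (Fin d)))
    (ρA ρB : EuclideanSpace ℝ (Fin d) → ℝ),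
      IsExpansiveEllipsoid A ΩA ∧ IsExpansiveEllipsoid B ΩB ∧
      IsStepQuasiNorm A ΩA ρA ∧ IsStepQuasiNorm B ΩB ρB ∧
      ∃ C : ℝ, 1 ≤ C ∧ ∀ x, (1 / C) * ρA x ≤ ρB x ∧ ρB x ≤ C * ρA x

open Matrix
open scoped Matrix.Norms.L2Operator

section Shells

variable {E : Type*} {X : ℤ → Set E}

lemma Monotone.eq_of_mem_shell (hX : Monotone X) {x : E} {i k : ℤ}
    (hi : x ∈ X (i + 1) \ X i) (hk : x ∈ X (k + 1) \ X k) : i = k := by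
  by_contra hne
  rcases lt_or_gt_of_ne hne with h | h
  · exact hk.2 (hX (by omega : i + 1 ≤ k) hi.1)
  · exact hi.2 (hX (by omega : k + 1 ≤ i) hk.1)

lemma Monotone.exists_mem_shell (hX : Monotone X) {x : E} {m n : ℤ}
    (hm : x ∉ X m) (hn : x ∈ X n) : ∃ i, x ∈ X (i + 1) \ X i := by
  obtain ⟨k, hk, hleast⟩ := Int.exists_least_of_bdd
    ⟨m + 1, fun z hz => by by_contra! h; exact hm (hX (by omega : z ≤ m) hz)⟩ ⟨n, hn⟩
  exact ⟨k - 1, by simpa using hk, fun h => by have := hleast _ h; omega⟩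

variable [Zero E]

structure IsExhaustiveChain (X : ℤ → Set E) : Prop where
  mono : Monotone X
  zero_mem : ∀ i, 0 ∈ X i
  exists_mem_shell : ∀ x ≠ 0, ∃ i, x ∈ X (i + 1) \ X i

namespace IsExhaustiveChain

variable {a : ℝ} {ρ : E → ℝ}

lemma exists_stepFun (hX : IsExhaustiveChain X) (a : ℝ) :
    ∃ ρ : E → ℝ, ρ 0 = 0 ∧ ∀ i, ∀ x ∈ X (i + 1) \ X i, ρ x = a ^ i := by
  classical
  refine ⟨fun x => if h : ∃ i, x ∈ X (i + 1) \ X i then a ^ h.choose else 0, dif_neg ?_,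
    fun i x hx => ?_⟩
  · rintro ⟨i, hi⟩
    exact hi.2 (hX.zero_mem i)
  · have h : ∃ i, x ∈ X (i + 1) \ X i := ⟨i, hx⟩
    simp only [dif_pos h, hX.mono.eq_of_mem_shell h.choose_spec hx]

lemma stepFun_nonneg (hX : IsExhaustiveChain X) (ha : 0 ≤ a) (hρ0 : ρ 0 = 0)
    (hρ : ∀ i, ∀ x ∈ X (i + 1) \ X i, ρ x = a ^ i) (x : E) : 0 ≤ ρ x := by
  rcases eq_or_ne x 0 with rfl | hx
  · exact hρ0.ge
  · obtain ⟨i, hi⟩ := hX.exists_mem_shell x hx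
    exact (hρ i x hi).symm ▸ zpow_nonneg ha i

lemma forall_le_mul_iff (hX : IsExhaustiveChain X) {Y : ℤ → Set E} (hY : IsExhaustiveChain Y)
    {b C : ℝ} {σ : E → ℝ} (ha : 1 ≤ a) (hb : 1 ≤ b) (hC : 0 ≤ C)
    (hρ0 : ρ 0 = 0) (hρ : ∀ i, ∀ x ∈ X (i + 1) \ X i, ρ x = a ^ i)
    (hσ0 : σ 0 = 0) (hσ : ∀ j, ∀ x ∈ Y (j + 1) \ Y j, σ x = b ^ j) :
    (∀ x, ρ x ≤ C * σ x) ↔ ∀ i j : ℤ, C * b ^ j < a ^ i → Y (j + 1) ⊆ X i := by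
  constructor
  · intro h i j hij x hxY
    by_contra hxX
    have hx : x ≠ 0 := by
      rintro rfl
      exact hxX (hX.zero_mem i)
    obtain ⟨i', hi'⟩ := hX.exists_mem_shell x hx
    obtain ⟨j', hj'⟩ := hY.exists_mem_shell x hx
    have hii' : i ≤ i' := by
      by_contra! h'
      exact hxX (hX.mono (by omega : i' + 1 ≤ i) hi'.1)
    have hjj' : j' ≤ j := by
      by_contra! h'
      exact hj'.2 (hY.mono (by omega : j + 1 ≤ j') hxY)
    have hx' := h x
    rw [hρ i' x hi', hσ j' x hj'] at hx'
    have := zpow_le_zpow_right₀ ha hii'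
    have := mul_le_mul_of_nonneg_left (zpow_le_zpow_right₀ hb hjj') hC
    linarith
  · intro h x
    rcases eq_or_ne x 0 with rfl | hx
    · simp [hρ0, hσ0]
    obtain ⟨i, hi⟩ := hX.exists_mem_shell x hx
    obtain ⟨j, hj⟩ := hY.exists_mem_shell x hx
    rw [hρ i x hi, hσ j x hj]
    by_contra! hlt
    exact hi.2 (h i j hlt hj.1)

end IsExhaustiveChain

end Shells

lemma exists_mutual_bound_iff {α : Type*} {ρ σ : α → ℝ} (hρ : ∀ x, 0 ≤ ρ x)
    (hσ : ∀ x, 0 ≤ σ x) :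
    (∃ C : ℝ, 1 ≤ C ∧ ∀ x, 1 / C * ρ x ≤ σ x ∧ σ x ≤ C * ρ x) ↔
      (∃ C : ℝ, 0 ≤ C ∧ ∀ x, ρ x ≤ C * σ x) ∧ ∃ C : ℝ, 0 ≤ C ∧ ∀ x, σ x ≤ C * ρ x := by
  constructor
  · rintro ⟨C, hC, h⟩
    have hC0 : 0 < C := by linarith
    refine ⟨⟨C, hC0.le, fun x => ?_⟩, ⟨C, hC0.le, fun x => (h x).2⟩⟩
    have := (h x).1
    rwa [one_div_mul_eq_div, div_le_iff₀' hC0] at this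
  · rintro ⟨⟨C₁, -, h₁⟩, ⟨C₂, -, h₂⟩⟩
    set C := max 1 (max C₁ C₂)
    have hC : 1 ≤ C := le_max_left _ _
    have hC₁C : C₁ ≤ C := (le_max_left _ _).trans (le_max_right _ _)
    have hC₂C : C₂ ≤ C := (le_max_right _ _).trans (le_max_right _ _)
    refine ⟨C, hC, fun x => ⟨?_, ?_⟩⟩
    · rw [one_div_mul_eq_div, div_le_iff₀' (by linarith)]
      exact (h₁ x).trans (mul_le_mul_of_nonneg_right hC₁C (hσ x))
    · exact (h₂ x).trans (mul_le_mul_of_nonneg_right hC₂C (hρ x))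

variable {d : ℕ}

section Ellipsoid

lemma ms_mul (M N : Matrix (Fin d) (Fin d) ℝ) (x : EuclideanSpace ℝ (Fin d)) :
    ms (M * N) x = ms M (ms N x) :=
  congrArg (WithLp.toLp 2) (mulVec_mulVec x.ofLp M N).symm

lemma ms_one (x : EuclideanSpace ℝ (Fin d)) : ms 1 x = x :=
  congrArg (WithLp.toLp 2) (one_mulVec x.ofLp)

lemma norm_ms_le (M : Matrix (Fin d) (Fin d) ℝ) (x : EuclideanSpace ℝ (Fin d)) :
    ‖ms M x‖ ≤ ‖M‖ * ‖x‖ :=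
  (toEuclideanCLM (𝕜 := ℝ) M).le_opNorm x

lemma norm_one_le : ‖(1 : Matrix (Fin d) (Fin d) ℝ)‖ ≤ 1 := by
  rw [cstar_norm_def, map_one]
  exact ContinuousLinearMap.norm_id_le

lemma l2_opNorm_transpose (M : Matrix (Fin d) (Fin d) ℝ) : ‖Mᵀ‖ = ‖M‖ := by
  rw [← conjTranspose_eq_transpose_of_trivial, l2_opNorm_conjTranspose]

lemma volume_image_ms (M : Matrix (Fin d) (Fin d) ℝ) (s : Set (EuclideanSpace ℝ (Fin d))) :
    volume (ms M '' s) = ENNReal.ofReal |M.det| * volume s := by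
  rw [show ms M '' s = toEuclideanLin (𝕜 := ℝ) M '' s from rfl,
    Measure.addHaar_image_linearMap, LinearMap.det_toLpLin]

lemma inv_smul_of_ne_zero {c : ℝ} (hc : c ≠ 0) {M : Matrix (Fin d) (Fin d) ℝ}
    (hM : IsUnit M.det) : (c • M)⁻¹ = c⁻¹ • M⁻¹ :=
  inv_eq_right_inv (by rw [smul_mul_smul_comm, mul_inv_cancel₀ hc, mul_nonsing_inv _ hM, one_smul])

lemma isUnit_det_smul {c : ℝ} (hc : c ≠ 0) {M : Matrix (Fin d) (Fin d) ℝ}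
    (hM : IsUnit M.det) : IsUnit (c • M).det := by
  rw [det_smul]
  exact isUnit_iff_ne_zero.2 (mul_ne_zero (pow_ne_zero _ hc) hM.ne_zero)

def ellipsoid (P : Matrix (Fin d) (Fin d) ℝ) : Set (EuclideanSpace ℝ (Fin d)) :=
  {x | ‖ms P x‖ < 1}

variable {M P Q : Matrix (Fin d) (Fin d) ℝ}

lemma image_ellipsoid (hM : IsUnit M.det) (P : Matrix (Fin d) (Fin d) ℝ) :
    ms M '' ellipsoid P = ellipsoid (P * M⁻¹) := by
  ext y
  constructor
  · rintro ⟨x, hx, rfl⟩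
    show ‖ms (P * M⁻¹) (ms M x)‖ < 1
    rwa [← ms_mul, Matrix.mul_assoc, nonsing_inv_mul _ hM, Matrix.mul_one]
  · intro hy
    refine ⟨ms M⁻¹ y, ?_, ?_⟩
    · show ‖ms P (ms M⁻¹ y)‖ < 1
      rwa [← ms_mul]
    · rw [← ms_mul, mul_nonsing_inv _ hM, ms_one]

lemma ellipsoid_subset_ellipsoid_iff (hP : IsUnit P.det) :
    ellipsoid P ⊆ ellipsoid Q ↔ ‖Q * P⁻¹‖ ≤ 1 := by
  have hQ : ∀ x, ms Q x = ms (Q * P⁻¹) (ms P x) := fun x => by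
    rw [← ms_mul, Matrix.mul_assoc, nonsing_inv_mul _ hP, Matrix.mul_one]
  constructor
  · intro h
    by_contra! hlt
    obtain ⟨z, hz, hlt⟩ := (toEuclideanCLM (𝕜 := ℝ) (Q * P⁻¹)).exists_lt_apply_of_lt_opNorm hlt
    have hmem : ms P⁻¹ z ∈ ellipsoid P := by
      show ‖ms P (ms P⁻¹ z)‖ < 1
      rwa [← ms_mul, mul_nonsing_inv _ hP, ms_one]
    have : ‖ms Q (ms P⁻¹ z)‖ < 1 := h hmem
    rw [hQ, ← ms_mul P, mul_nonsing_inv _ hP, ms_one] at this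
    exact (this.trans hlt).false
  · intro h x hx
    show ‖ms Q x‖ < 1
    rw [hQ]
    calc ‖ms (Q * P⁻¹) (ms P x)‖ ≤ ‖Q * P⁻¹‖ * ‖ms P x‖ := norm_ms_le _ _
      _ ≤ 1 * ‖ms P x‖ := by gcongr
      _ < 1 := by rw [one_mul]; exact hx

lemma smul_ellipsoid {t : ℝ} (ht : 0 < t) (P : Matrix (Fin d) (Fin d) ℝ) :
    t • ellipsoid P = ellipsoid (t⁻¹ • P) := by
  ext x
  rw [Set.mem_smul_set_iff_inv_smul_mem₀ ht.ne']
  simp [ellipsoid, ms, mulVec_smul, smul_mulVec]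

lemma volume_ellipsoid_eq (hP : IsUnit P.det) (hQ : IsUnit Q.det) (h : |P.det| = |Q.det|) :
    volume (ellipsoid Q) = volume (ellipsoid P) := by
  have hdet : IsUnit (Q⁻¹ * P).det := by
    rw [det_mul]; exact (isUnit_nonsing_inv_det Q hQ).mul hP
  have himage : ms (Q⁻¹ * P) '' ellipsoid P = ellipsoid Q := by
    rw [image_ellipsoid hdet, Matrix.mul_inv_rev, nonsing_inv_nonsing_inv _ hQ,
      ← Matrix.mul_assoc, mul_nonsing_inv _ hP, Matrix.one_mul]
  rw [← himage, volume_image_ms, det_mul, det_nonsing_inv, Ring.inverse_eq_inv', abs_mul,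
    abs_inv, h, inv_mul_cancel₀ (abs_pos.2 hQ.ne_zero).ne', ENNReal.ofReal_one, one_mul]

end Ellipsoid

lemma one_le_abs_det_of_smul_subset_image {A : Matrix (Fin d) (Fin d) ℝ}
    {Ω : Set (EuclideanSpace ℝ (Fin d))} (hΩ : volume Ω = 1) {r : ℝ} (hr : 1 ≤ r)
    (h : r • Ω ⊆ ms A '' Ω) : 1 ≤ |A.det| := by
  have hvol := measure_mono (μ := volume) h
  rw [Measure.addHaar_smul_of_nonneg volume (by linarith), volume_image_ms, hΩ, mul_one,
    mul_one, finrank_euclideanSpace_fin, ENNReal.ofReal_le_ofReal_iff (abs_nonneg _)] at hvol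
  exact (one_le_pow₀ hr).trans hvol

/-- The content of `IsExpansiveEllipsoid A (ellipsoid P)` apart from the volume normalisation. -/
structure ExpandsEllipsoid (A P : Matrix (Fin d) (Fin d) ℝ) : Prop where
  one_le_abs_det : 1 ≤ |A.det|
  isUnit_det_right : IsUnit P.det
  norm_conj_inv_lt_one : ‖P * A⁻¹ * P⁻¹‖ < 1

section Expansion

variable {A B P Q : Matrix (Fin d) (Fin d) ℝ}

lemma ExpandsEllipsoid.isUnit_det (h : ExpandsEllipsoid A P) : IsUnit A.det :=
  isUnit_iff_ne_zero.2 (abs_pos.1 (zero_lt_one.trans_le h.one_le_abs_det))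

lemma smul_ellipsoid_subset_image_iff (hA : IsUnit A.det) (hP : IsUnit P.det) {r : ℝ}
    (hr : 0 < r) : r • ellipsoid P ⊆ ms A '' ellipsoid P ↔ r * ‖P * A⁻¹ * P⁻¹‖ ≤ 1 := by
  rw [smul_ellipsoid hr, image_ellipsoid hA,
    ellipsoid_subset_ellipsoid_iff (isUnit_det_smul (inv_ne_zero hr.ne') hP),
    inv_smul_of_ne_zero (inv_ne_zero hr.ne') hP, inv_inv, mul_smul_comm, norm_smul,
    Real.norm_of_nonneg hr.le]

lemma IsExpansiveEllipsoid.exists_expandsEllipsoid {Ω : Set (EuclideanSpace ℝ (Fin d))}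
    (h : IsExpansiveEllipsoid A Ω) :
    ∃ P, Ω = ellipsoid P ∧ ExpandsEllipsoid A P ∧ volume (ellipsoid P) = 1 := by
  obtain ⟨⟨P, hPu, rfl⟩, hvol, r, hr, -, hsub⟩ := h
  have hA := one_le_abs_det_of_smul_subset_image hvol hr.le hsub
  have hP : IsUnit P.det := (isUnit_iff_isUnit_det P).1 hPu
  have hnorm := (smul_ellipsoid_subset_image_iff
    (isUnit_iff_ne_zero.2 (abs_pos.1 (zero_lt_one.trans_le hA))) hP (by linarith)).1 hsub
  refine ⟨P, rfl, ⟨hA, hP, ?_⟩, hvol⟩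
  nlinarith [norm_nonneg (P * A⁻¹ * P⁻¹)]

lemma ExpandsEllipsoid.isExpansiveEllipsoid (h : ExpandsEllipsoid A P)
    (hvol : volume (ellipsoid P) = 1) : IsExpansiveEllipsoid A (ellipsoid P) := by
  obtain ⟨s, hs, hs1⟩ := exists_between h.norm_conj_inv_lt_one
  have hs0 : 0 < s := (norm_nonneg _).trans_lt hs
  refine ⟨⟨P, (isUnit_iff_isUnit_det P).2 h.isUnit_det_right, rfl⟩, hvol, s⁻¹,
    (one_lt_inv₀ hs0).2 hs1, ?_, ?_⟩
  · rw [smul_ellipsoid (inv_pos.2 hs0), inv_inv,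
      ellipsoid_subset_ellipsoid_iff h.isUnit_det_right, smul_mul_assoc,
      mul_nonsing_inv _ h.isUnit_det_right, norm_smul, Real.norm_of_nonneg hs0.le]
    nlinarith [norm_one_le (d := d)]
  · rw [smul_ellipsoid_subset_image_iff h.isUnit_det h.isUnit_det_right (inv_pos.2 hs0),
      inv_mul_le_iff₀ hs0, mul_one]
    exact hs.le

end Expansion

section Chain

variable {A B P Q : Matrix (Fin d) (Fin d) ℝ}

lemma image_zpow_ellipsoid (hA : IsUnit A.det) (P : Matrix (Fin d) (Fin d) ℝ) (i : ℤ) :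
    ms (A ^ i) '' ellipsoid P = ellipsoid (P * A ^ (-i)) := by
  rw [image_ellipsoid (hA.det_zpow i), Matrix.zpow_neg hA]

lemma image_zpow_subset_image_zpow_iff (hA : IsUnit A.det) (hB : IsUnit B.det)
    (hQ : IsUnit Q.det) (i j : ℤ) :
    ms (B ^ j) '' ellipsoid Q ⊆ ms (A ^ i) '' ellipsoid P ↔
      ‖P * A ^ (-i) * (B ^ j * Q⁻¹)‖ ≤ 1 := by
  have hdet : IsUnit (Q * B ^ (-j)).det := by
    rw [det_mul]
    exact hQ.mul (hB.det_zpow _)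
  rw [image_zpow_ellipsoid hA, image_zpow_ellipsoid hB, ellipsoid_subset_ellipsoid_iff hdet,
    Matrix.mul_inv_rev, Matrix.zpow_neg hB, nonsing_inv_nonsing_inv _ (hB.det_zpow j),
    Matrix.mul_assoc]

namespace ExpandsEllipsoid

lemma norm_mul_zpow_neg_add_le (h : ExpandsEllipsoid A P) (N : Matrix (Fin d) (Fin d) ℝ)
    (i : ℤ) (k : ℕ) :
    ‖P * A ^ (-(i + k)) * N‖ ≤ ‖P * A⁻¹ * P⁻¹‖ ^ k * ‖P * A ^ (-i) * N‖ := by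
  induction k with
  | zero => simp
  | succ k ih =>
    have hstep : P * A ^ (-(i + (k + 1 : ℕ))) * N =
        (P * A⁻¹ * P⁻¹) * (P * A ^ (-(i + k)) * N) := by
      rw [show -(i + ((k + 1 : ℕ) : ℤ)) = -1 + -(i + k) by push_cast; ring,
        Matrix.zpow_add h.isUnit_det, Matrix.zpow_neg_one]
      simp only [Matrix.mul_assoc, nonsing_inv_mul_cancel_left _ _ h.isUnit_det_right]
    calc ‖P * A ^ (-(i + (k + 1 : ℕ))) * N‖
        ≤ ‖P * A⁻¹ * P⁻¹‖ * ‖P * A ^ (-(i + k)) * N‖ := hstep ▸ norm_mul_le _ _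
      _ ≤ ‖P * A⁻¹ * P⁻¹‖ * (‖P * A⁻¹ * P⁻¹‖ ^ k * ‖P * A ^ (-i) * N‖) := by gcongr
      _ = ‖P * A⁻¹ * P⁻¹‖ ^ (k + 1) * ‖P * A ^ (-i) * N‖ := by ring

lemma monotone_image_zpow (h : ExpandsEllipsoid A P) :
    Monotone fun i : ℤ => ms (A ^ i) '' ellipsoid P := by
  refine monotone_int_of_le_succ fun i => (image_zpow_subset_image_zpow_iff h.isUnit_det
    h.isUnit_det h.isUnit_det_right _ _).2 ?_
  have hone : P * A ^ (-i) * (A ^ i * P⁻¹) = 1 := by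
    simp only [Matrix.mul_assoc, ← Matrix.mul_assoc (A ^ (-i)),
      zpow_neg_mul_zpow_self i h.isUnit_det, Matrix.one_mul, mul_nonsing_inv _ h.isUnit_det_right]
  have hdecay := h.norm_mul_zpow_neg_add_le (A ^ i * P⁻¹) i 1
  rw [hone, pow_one, Nat.cast_one] at hdecay
  nlinarith [h.norm_conj_inv_lt_one, norm_one_le (d := d), norm_nonneg (P * A⁻¹ * P⁻¹)]

lemma exists_mem_image_zpow (h : ExpandsEllipsoid A P) (x : EuclideanSpace ℝ (Fin d)) :
    ∃ n : ℤ, x ∈ ms (A ^ n) '' ellipsoid P := by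
  set K := ‖P‖ * ‖x‖
  obtain ⟨n, hn⟩ := exists_pow_lt_of_lt_one (by positivity : 0 < 1 / (K + 1))
    h.norm_conj_inv_lt_one
  rw [lt_div_iff₀ (by positivity)] at hn
  refine ⟨n, ?_⟩
  rw [image_zpow_ellipsoid h.isUnit_det]
  have hdecay := h.norm_mul_zpow_neg_add_le 1 0 n
  simp only [zero_add, neg_zero, zpow_zero, Matrix.mul_one] at hdecay
  calc ‖ms (P * A ^ (-(n : ℤ))) x‖ ≤ ‖P * A ^ (-(n : ℤ))‖ * ‖x‖ := norm_ms_le _ _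
    _ ≤ ‖P * A⁻¹ * P⁻¹‖ ^ n * K := by rw [← mul_assoc]; gcongr
    _ < 1 := by nlinarith [pow_nonneg (norm_nonneg (P * A⁻¹ * P⁻¹)) n]

lemma exists_not_mem_image_zpow (h : ExpandsEllipsoid A P) {x : EuclideanSpace ℝ (Fin d)}
    (hx : x ≠ 0) : ∃ m : ℤ, x ∉ ms (A ^ m) '' ellipsoid P := by
  have hPx : 0 < ‖ms P x‖ := norm_pos_iff.2 fun h0 => hx <| by
    rw [← ms_one x, ← nonsing_inv_mul _ h.isUnit_det_right, ms_mul, h0]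
    exact map_zero (toEuclideanCLM (𝕜 := ℝ) P⁻¹)
  obtain ⟨m, hm⟩ := exists_pow_lt_of_lt_one hPx h.norm_conj_inv_lt_one
  refine ⟨-m, fun hmem => ?_⟩
  rw [image_zpow_ellipsoid h.isUnit_det, neg_neg] at hmem
  have hdecay := h.norm_mul_zpow_neg_add_le P⁻¹ 0 m
  simp only [zero_add, neg_zero, zpow_zero, Matrix.mul_one,
    mul_nonsing_inv _ h.isUnit_det_right] at hdecay
  have hPx_eq : ms P x = ms (P * A ^ (-(m : ℤ)) * P⁻¹) (ms (P * A ^ (m : ℤ)) x) := by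
    rw [← ms_mul]
    simp only [Matrix.mul_assoc, nonsing_inv_mul_cancel_left _ _ h.isUnit_det_right,
      zpow_neg_mul_zpow_self _ h.isUnit_det, Matrix.mul_one]
  have : ‖ms P x‖ ≤ ‖P * A⁻¹ * P⁻¹‖ ^ m := by
    calc ‖ms P x‖ ≤ ‖P * A ^ (-(m : ℤ)) * P⁻¹‖ * ‖ms (P * A ^ (m : ℤ)) x‖ :=
          hPx_eq ▸ norm_ms_le _ _
      _ ≤ ‖P * A⁻¹ * P⁻¹‖ ^ m * 1 * 1 := by
          gcongr
          · exact hdecay.trans (mul_le_mul_of_nonneg_left norm_one_le (by positivity))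
          · exact hmem.le
      _ = ‖P * A⁻¹ * P⁻¹‖ ^ m := by ring
  linarith

lemma isExhaustiveChain (h : ExpandsEllipsoid A P) :
    IsExhaustiveChain fun i : ℤ => ms (A ^ i) '' ellipsoid P where
  mono := h.monotone_image_zpow
  zero_mem i := ⟨0, by simp [ellipsoid, ms], by simp [ms]⟩
  exists_mem_shell x hx := by
    obtain ⟨m, hm⟩ := h.exists_not_mem_image_zpow hx
    obtain ⟨n, hn⟩ := h.exists_mem_image_zpow x
    exact h.monotone_image_zpow.exists_mem_shell hm hn

lemma exists_isStepQuasiNorm (h : ExpandsEllipsoid A P) :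
    ∃ ρ, IsStepQuasiNorm A (ellipsoid P) ρ :=
  h.isExhaustiveChain.exists_stepFun |A.det|

end ExpandsEllipsoid

end Chain

/-- Matrix form of `ρ_A ≲ ρ_B`: the products `A⁻ⁱ Bʲ` stay bounded on the region where
`|det A| ^ i` dominates `|det B| ^ j`. -/
def ZpowBounded (A B : Matrix (Fin d) (Fin d) ℝ) : Prop :=
  ∃ C M : ℝ, ∀ i j : ℤ, C * |B.det| ^ j < |A.det| ^ i → ‖A ^ (-i) * B ^ j‖ ≤ M

section ZpowBounded

variable {A B P Q : Matrix (Fin d) (Fin d) ℝ}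

lemma ZpowBounded.transpose (hA : A.det ≠ 0) (hB : B.det ≠ 0) (h : ZpowBounded B A) :
    ZpowBounded Aᵀ Bᵀ := by
  obtain ⟨C, M, h⟩ := h
  refine ⟨C, M, fun i j hij => ?_⟩
  rw [det_transpose, det_transpose] at hij
  have ha : 0 < |A.det| ^ i := zpow_pos (abs_pos.2 hA) i
  have hb : 0 < |B.det| ^ j := zpow_pos (abs_pos.2 hB) j
  have hji : C * |A.det| ^ (-i) < |B.det| ^ (-j) := by
    rw [_root_.zpow_neg, _root_.zpow_neg, ← div_eq_mul_inv, ← one_div, div_lt_div_iff₀ ha hb,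
      one_mul]
    exact hij
  calc ‖Aᵀ ^ (-i) * Bᵀ ^ j‖ = ‖B ^ (-(-j)) * A ^ (-i)‖ := by
        rw [neg_neg, ← transpose_zpow, ← transpose_zpow, ← transpose_mul, l2_opNorm_transpose]
    _ ≤ M := h (-j) (-i) hji

/-- The contraction `P A⁻¹ P⁻¹` absorbs any bounded factor after finitely many steps. -/
lemma ExpandsEllipsoid.exists_norm_le_one_of_zpowBounded (hA : ExpandsEllipsoid A P)
    (hB : B.det ≠ 0) (h : ZpowBounded A B) :
    ∃ C : ℝ, 0 ≤ C ∧ ∀ i j : ℤ, C * |B.det| ^ j < |A.det| ^ i →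
      ‖P * A ^ (-i) * (B ^ (j + 1) * Q⁻¹)‖ ≤ 1 := by
  obtain ⟨C, M, h⟩ := h
  have ha0 : 0 < |A.det| := zero_lt_one.trans_le hA.one_le_abs_det
  have hb0 : 0 < |B.det| := abs_pos.2 hB
  set K := ‖P‖ * max M 0 * ‖Q⁻¹‖
  obtain ⟨k, hk⟩ := exists_pow_lt_of_lt_one (by positivity : 0 < 1 / (K + 1))
    hA.norm_conj_inv_lt_one
  rw [lt_div_iff₀ (by positivity)] at hk
  refine ⟨|C| * |B.det| * |A.det| ^ k, by positivity, fun i j hij => ?_⟩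
  have hregion : C * |B.det| ^ (j + 1) < |A.det| ^ (i - k) := by
    rw [zpow_add₀ hb0.ne', zpow_one, zpow_sub₀ ha0.ne', lt_div_iff₀ (by positivity),
      zpow_natCast]
    calc C * (|B.det| ^ j * |B.det|) * |A.det| ^ k
        ≤ |C| * (|B.det| ^ j * |B.det|) * |A.det| ^ k := by gcongr; exact le_abs_self C
      _ = |C| * |B.det| * |A.det| ^ k * |B.det| ^ j := by ring
      _ < |A.det| ^ i := hij
  have hbound : ‖P * A ^ (-(i - k)) * (B ^ (j + 1) * Q⁻¹)‖ ≤ K := by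
    calc ‖P * A ^ (-(i - k)) * (B ^ (j + 1) * Q⁻¹)‖
        = ‖P * (A ^ (-(i - k)) * B ^ (j + 1)) * Q⁻¹‖ := by simp only [Matrix.mul_assoc]
      _ ≤ ‖P‖ * ‖A ^ (-(i - k)) * B ^ (j + 1)‖ * ‖Q⁻¹‖ := norm_mul₃_le
      _ ≤ ‖P‖ * max M 0 * ‖Q⁻¹‖ := by gcongr; exact (h _ _ hregion).trans (le_max_left M 0)
  calc ‖P * A ^ (-i) * (B ^ (j + 1) * Q⁻¹)‖
      ≤ ‖P * A⁻¹ * P⁻¹‖ ^ k * ‖P * A ^ (-(i - k)) * (B ^ (j + 1) * Q⁻¹)‖ := by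
        simpa using hA.norm_mul_zpow_neg_add_le (B ^ (j + 1) * Q⁻¹) (i - k) k
    _ ≤ ‖P * A⁻¹ * P⁻¹‖ ^ k * K := by gcongr
    _ ≤ 1 := by nlinarith [pow_nonneg (norm_nonneg (P * A⁻¹ * P⁻¹)) k]

lemma zpowBounded_of_norm_le_one (hP : IsUnit P.det) (hQ : IsUnit Q.det) (hB : 1 ≤ |B.det|)
    {C : ℝ} (hC : 0 ≤ C)
    (h : ∀ i j : ℤ, C * |B.det| ^ j < |A.det| ^ i → ‖P * A ^ (-i) * (B ^ (j + 1) * Q⁻¹)‖ ≤ 1) :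
    ZpowBounded A B := by
  refine ⟨C, ‖P⁻¹‖ * ‖Q‖, fun i j hij => ?_⟩
  have hregion : C * |B.det| ^ (j - 1) < |A.det| ^ i :=
    lt_of_le_of_lt (mul_le_mul_of_nonneg_left (zpow_le_zpow_right₀ hB (by omega)) hC) hij
  have hone := h i (j - 1) hregion
  rw [sub_add_cancel] at hone
  calc ‖A ^ (-i) * B ^ j‖ = ‖P⁻¹ * (P * A ^ (-i) * (B ^ j * Q⁻¹)) * Q‖ := by
        simp only [Matrix.mul_assoc, nonsing_inv_mul_cancel_left _ _ hP, nonsing_inv_mul _ hQ,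
          Matrix.mul_one]
    _ ≤ ‖P⁻¹‖ * ‖P * A ^ (-i) * (B ^ j * Q⁻¹)‖ * ‖Q‖ := norm_mul₃_le
    _ ≤ ‖P⁻¹‖ * 1 * ‖Q‖ := by gcongr
    _ = ‖P⁻¹‖ * ‖Q‖ := by ring

end ZpowBounded

section Equivalence

variable {A B P Q : Matrix (Fin d) (Fin d) ℝ} {ρ σ : EuclideanSpace ℝ (Fin d) → ℝ}

lemma IsStepQuasiNorm.nonneg (hA : ExpandsEllipsoid A P) (hρ : IsStepQuasiNorm A (ellipsoid P) ρ)
    (x : EuclideanSpace ℝ (Fin d)) : 0 ≤ ρ x :=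
  hA.isExhaustiveChain.stepFun_nonneg (abs_nonneg _) hρ.1 hρ.2 x

lemma exists_le_mul_iff_zpowBounded (hA : ExpandsEllipsoid A P) (hB : ExpandsEllipsoid B Q)
    (hρ : IsStepQuasiNorm A (ellipsoid P) ρ) (hσ : IsStepQuasiNorm B (ellipsoid Q) σ) :
    (∃ C : ℝ, 0 ≤ C ∧ ∀ x, ρ x ≤ C * σ x) ↔ ZpowBounded A B := by
  have hcompare : ∀ C : ℝ, 0 ≤ C → ((∀ x, ρ x ≤ C * σ x) ↔ ∀ i j : ℤ,
      C * |B.det| ^ j < |A.det| ^ i → ‖P * A ^ (-i) * (B ^ (j + 1) * Q⁻¹)‖ ≤ 1) := by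
    intro C hC
    rw [hA.isExhaustiveChain.forall_le_mul_iff hB.isExhaustiveChain hA.one_le_abs_det
      hB.one_le_abs_det hC hρ.1 hρ.2 hσ.1 hσ.2]
    simp only [image_zpow_subset_image_zpow_iff hA.isUnit_det hB.isUnit_det hB.isUnit_det_right]
  constructor
  · rintro ⟨C, hC, h⟩
    exact zpowBounded_of_norm_le_one hA.isUnit_det_right hB.isUnit_det_right
      hB.one_le_abs_det hC ((hcompare C hC).1 h)
  · intro h
    obtain ⟨C, hC, h⟩ := hA.exists_norm_le_one_of_zpowBounded hB.isUnit_det.ne_zero h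
    exact ⟨C, hC, (hcompare C hC).2 h⟩

lemma exists_mutual_bound_iff_zpowBounded (hA : ExpandsEllipsoid A P)
    (hB : ExpandsEllipsoid B Q) (hρ : IsStepQuasiNorm A (ellipsoid P) ρ)
    (hσ : IsStepQuasiNorm B (ellipsoid Q) σ) :
    (∃ C : ℝ, 1 ≤ C ∧ ∀ x, 1 / C * ρ x ≤ σ x ∧ σ x ≤ C * ρ x) ↔
      ZpowBounded A B ∧ ZpowBounded B A := by
  rw [exists_mutual_bound_iff (hρ.nonneg hA) (hσ.nonneg hB),
    exists_le_mul_iff_zpowBounded hA hB hρ hσ, exists_le_mul_iff_zpowBounded hB hA hσ hρ]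

lemma ExpandsEllipsoid.transpose (h : ExpandsEllipsoid A P) {c : ℝ} (hc : c ≠ 0) :
    ExpandsEllipsoid Aᵀ (c • P⁻¹ᵀ) := by
  have hP := h.isUnit_det_right
  have hPt : IsUnit Pᵀ.det := by rwa [det_transpose]
  have hPit : IsUnit P⁻¹ᵀ.det := by rw [det_transpose]; exact isUnit_nonsing_inv_det P hP
  refine ⟨by rw [det_transpose]; exact h.one_le_abs_det, isUnit_det_smul hc hPit, ?_⟩
  have hconj : c • P⁻¹ᵀ * Aᵀ⁻¹ * (c • P⁻¹ᵀ)⁻¹ = (P * A⁻¹ * P⁻¹)ᵀ := by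
    rw [inv_smul_of_ne_zero hc hPit, transpose_nonsing_inv, nonsing_inv_nonsing_inv _ hPt,
      smul_mul_assoc, smul_mul_assoc, mul_smul_comm, smul_smul, mul_inv_cancel₀ hc, one_smul]
    simp only [transpose_mul, transpose_nonsing_inv, Matrix.mul_assoc]
  rw [hconj, l2_opNorm_transpose]
  exact h.norm_conj_inv_lt_one

/-- The dual ellipsoid `ellipsoid P⁻¹ᵀ`, rescaled to have the same volume as `ellipsoid P`. -/
lemma ExpandsEllipsoid.exists_transpose (hd : d ≠ 0) (h : ExpandsEllipsoid A P)
    (hvol : volume (ellipsoid P) = 1) :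
    ∃ P', ExpandsEllipsoid Aᵀ P' ∧ volume (ellipsoid P') = 1 := by
  have hP := h.isUnit_det_right
  have hP0 : 0 < |P.det| := abs_pos.2 hP.ne_zero
  set c := (|P.det| ^ 2) ^ ((d : ℝ)⁻¹)
  have hc : 0 < c := by positivity
  have hcd : c ^ d = |P.det| ^ 2 := Real.rpow_inv_natCast_pow (by positivity) hd
  have hP' := h.transpose hc.ne'
  refine ⟨_, hP', ?_⟩
  rw [← hvol]
  refine volume_ellipsoid_eq hP hP'.isUnit_det_right ?_
  rw [det_smul, Fintype.card_fin, det_transpose, det_nonsing_inv, Ring.inverse_eq_inv', abs_mul,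
    abs_pow, abs_of_pos hc, abs_inv, hcd]
  field_simp

lemma StepEquivalent.transpose (hd : d ≠ 0) (h : StepEquivalent A B) :
    StepEquivalent Aᵀ Bᵀ := by
  obtain ⟨ΩA, ΩB, ρA, ρB, hΩA, hΩB, hρA, hρB, hAB⟩ := h
  obtain ⟨P, rfl, hAP, hPvol⟩ := hΩA.exists_expandsEllipsoid
  obtain ⟨Q, rfl, hBQ, hQvol⟩ := hΩB.exists_expandsEllipsoid
  obtain ⟨P', hAP', hP'vol⟩ := hAP.exists_transpose hd hPvol
  obtain ⟨Q', hBQ', hQ'vol⟩ := hBQ.exists_transpose hd hQvol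
  obtain ⟨ρA', hρA'⟩ := hAP'.exists_isStepQuasiNorm
  obtain ⟨ρB', hρB'⟩ := hBQ'.exists_isStepQuasiNorm
  rw [exists_mutual_bound_iff_zpowBounded hAP hBQ hρA hρB] at hAB
  refine ⟨_, _, ρA', ρB', hAP'.isExpansiveEllipsoid hP'vol, hBQ'.isExpansiveEllipsoid hQ'vol,
    hρA', hρB', (exists_mutual_bound_iff_zpowBounded hAP' hBQ' hρA' hρB').2 ⟨?_, ?_⟩⟩
  · exact hAB.2.transpose hAP.isUnit_det.ne_zero hBQ.isUnit_det.ne_zero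
  · exact hAB.1.transpose hBQ.isUnit_det.ne_zero hAP.isUnit_det.ne_zero

end Equivalence

theorem stmt3_general {d : ℕ} (A B : Matrix (Fin d) (Fin d) ℝ) :
    StepEquivalent A B ↔ StepEquivalent A.transpose B.transpose := by
  rcases eq_or_ne d 0 with rfl | hd
  · rw [Subsingleton.elim Aᵀ A, Subsingleton.elim Bᵀ B]
  · refine ⟨StepEquivalent.transpose hd, fun h => ?_⟩
    simpa only [transpose_transpose] using h.transpose hd

/-- Two expansive matrices are equivalent if and only if their transposes are equivalent. -/
theorem stmt3 {d : ℕ} (A B : Matrix (Fin d) (Fin d) ℝ)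
    (hA : Expansive A) (hB : Expansive B) :
    StepEquivalent A B ↔ StepEquivalent A.transpose B.transpose :=
  stmt3_general A B
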